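/- (Theorem 2, MLP part.) The complex-gradient map G of the MLP objective is Lipschitz continuous on ℂ^N with Lipschitz constant 1 + (max_i I_i)/ε², with respect to the Euclidean norm ‖u‖² = Σᵢ |uᵢ|². -/

import Mathlib

/-- The complex-gradient map of the MLP objective:
`G(u) = U* w(u)` with `w(u)ᵢ = (Uu)ᵢ (1 − Iᵢ/(|(Uu)ᵢ|²+ε²))`. -/
noncomputable def mlpGrad {N : ℕ} (U : Matrix (Fin N) (Fin N) ℂ)
    (I : Fin N → ℝ) (ε : ℝ) (u : EuclideanSpace ℂ (Fin N)) :
    EuclideanSpace ℂ (Fin N) :=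
  WithLp.toLp 2 <| (star U).mulVec fun i =>
    U.mulVec u i * (((1 : ℝ) - I i / (‖U.mulVec u i‖ ^ 2 + ε ^ 2) : ℝ) : ℂ)

open Matrix in
/-- Sum of squared norms is preserved by `mulVec` with an isometry matrix. -/
lemma sum_normSq_mulVec_aux {N : ℕ} (M : Matrix (Fin N) (Fin N) ℂ)
    (hM : star M * M = 1) (v : Fin N → ℂ) :
    ∑ i, Complex.normSq ((M *ᵥ v) i) = ∑ i, Complex.normSq (v i) := by
  have key : ∀ z : Fin N → ℂ, star z ⬝ᵥ z = ((∑ i, Complex.normSq (z i) : ℝ) : ℂ) := by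
    intro z
    simp only [dotProduct, Pi.star_apply, Complex.star_def, Complex.ofReal_sum]
    refine Finset.sum_congr rfl fun i _ => ?_
    rw [mul_comm, Complex.mul_conj]
  have h1 : star (M *ᵥ v) ⬝ᵥ (M *ᵥ v) = star v ⬝ᵥ v := by
    rw [Matrix.star_mulVec, Matrix.dotProduct_mulVec, Matrix.vecMul_vecMul,
      ← Matrix.star_eq_conjTranspose, hM, Matrix.vecMul_one]
  rw [key, key] at h1
  exact_mod_cast h1

/-- Key scalar Lipschitz bound for the MLP nonlinearity. -/
lemma scalar_lip_aux (ε : ℝ) (hε : 0 < ε) (c : ℝ) (hc : 0 ≤ c) (z w : ℂ) :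
    ‖z * (((1:ℝ) - c / ((‖z‖) ^ 2 + ε ^ 2) : ℝ) : ℂ)
      - w * (((1:ℝ) - c / ((‖w‖) ^ 2 + ε ^ 2) : ℝ) : ℂ)‖
      ≤ (1 + c / ε ^ 2) * ‖z - w‖ := by
  set a := ‖z‖ with ha
  set b := ‖w‖ with hb
  have ha0 : 0 ≤ a := norm_nonneg z
  have hb0 : 0 ≤ b := norm_nonneg w
  have hA : (0:ℝ) < a ^ 2 + ε ^ 2 := by positivity
  have hB : (0:ℝ) < b ^ 2 + ε ^ 2 := by positivity
  have hA' : ((a ^ 2 + ε ^ 2 : ℝ) : ℂ) ≠ 0 := by exact_mod_cast hA.ne'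
  have hB' : ((b ^ 2 + ε ^ 2 : ℝ) : ℂ) ≠ 0 := by exact_mod_cast hB.ne'
  have hzA : ((a ^ 2 + ε ^ 2 : ℝ) : ℂ) = z * (starRingEnd ℂ) z + (ε:ℂ) ^ 2 := by
    rw [Complex.mul_conj]; push_cast [ha, Complex.sq_norm]; ring
  have hzB : ((b ^ 2 + ε ^ 2 : ℝ) : ℂ) = w * (starRingEnd ℂ) w + (ε:ℂ) ^ 2 := by
    rw [Complex.mul_conj]; push_cast [hb, Complex.sq_norm]; ring
  have hsplit : z * (((1:ℝ) - c / (a ^ 2 + ε ^ 2) : ℝ) : ℂ)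
      - w * (((1:ℝ) - c / (b ^ 2 + ε ^ 2) : ℝ) : ℂ)
      = (z - w) - (c:ℂ) * (z / ((a ^ 2 + ε ^ 2 : ℝ) : ℂ) - w / ((b ^ 2 + ε ^ 2 : ℝ) : ℂ)) := by
    have e1 : (((1:ℝ) - c / (a ^ 2 + ε ^ 2) : ℝ) : ℂ) = 1 - (c:ℂ) / ((a ^ 2 + ε ^ 2 : ℝ) : ℂ) := by
      push_cast; ring
    have e2 : (((1:ℝ) - c / (b ^ 2 + ε ^ 2) : ℝ) : ℂ) = 1 - (c:ℂ) / ((b ^ 2 + ε ^ 2 : ℝ) : ℂ) := by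
      push_cast; ring
    rw [e1, e2]; ring
  have hnum : z / ((a ^ 2 + ε ^ 2 : ℝ) : ℂ) - w / ((b ^ 2 + ε ^ 2 : ℝ) : ℂ)
      = ((ε:ℂ) ^ 2 * (z - w) - z * w * (starRingEnd ℂ) (z - w))
        / (((a ^ 2 + ε ^ 2 : ℝ) : ℂ) * ((b ^ 2 + ε ^ 2 : ℝ) : ℂ)) := by
    rw [div_sub_div _ _ hA' hB', hzA, hzB, map_sub]
    congr 1
    ring
  have habs : ‖z / ((a ^ 2 + ε ^ 2 : ℝ) : ℂ) - w / ((b ^ 2 + ε ^ 2 : ℝ) : ℂ)‖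
      ≤ ‖z - w‖ / ε ^ 2 := by
    rw [hnum, norm_div, norm_mul]
    have h1 : ‖(ε:ℂ) ^ 2 * (z - w) - z * w * (starRingEnd ℂ) (z - w)‖
        ≤ (ε ^ 2 + a * b) * ‖z - w‖ := by
      calc ‖(ε:ℂ) ^ 2 * (z - w) - z * w * (starRingEnd ℂ) (z - w)‖
          ≤ ‖(ε:ℂ) ^ 2 * (z - w)‖ + ‖z * w * (starRingEnd ℂ) (z - w)‖ :=
            norm_sub_le _ _
        _ = ε ^ 2 * ‖z - w‖ + a * b * ‖z - w‖ := by
            rw [norm_mul, norm_mul, norm_mul, Complex.norm_conj]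
            simp [ha, hb, Complex.norm_real, abs_of_pos hε, sq_abs]
        _ = (ε ^ 2 + a * b) * ‖z - w‖ := by ring
    have h2 : ‖((a ^ 2 + ε ^ 2 : ℝ) : ℂ)‖ * ‖((b ^ 2 + ε ^ 2 : ℝ) : ℂ)‖
        = (a ^ 2 + ε ^ 2) * (b ^ 2 + ε ^ 2) := by
      rw [Complex.norm_real, Complex.norm_real, Real.norm_eq_abs, Real.norm_eq_abs, abs_of_pos hA, abs_of_pos hB]
    rw [h2]
    have hle : (ε ^ 2 + a * b) * ε ^ 2 ≤ (a ^ 2 + ε ^ 2) * (b ^ 2 + ε ^ 2) := by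
      nlinarith [sq_nonneg (a - b), sq_nonneg (a*b), mul_nonneg ha0 hb0, sq_nonneg ε]
    rw [div_le_div_iff₀ (by positivity) (by positivity)]
    calc ‖(ε:ℂ) ^ 2 * (z - w) - z * w * (starRingEnd ℂ) (z - w)‖ * ε ^ 2
        ≤ (ε ^ 2 + a * b) * ‖z - w‖ * ε ^ 2 :=
          mul_le_mul_of_nonneg_right h1 (by positivity)
      _ ≤ ‖z - w‖ * ((a ^ 2 + ε ^ 2) * (b ^ 2 + ε ^ 2)) := by
          nlinarith [norm_nonneg (z - w)]
  calc ‖z * (((1:ℝ) - c / (a ^ 2 + ε ^ 2) : ℝ) : ℂ)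
        - w * (((1:ℝ) - c / (b ^ 2 + ε ^ 2) : ℝ) : ℂ)‖
      = ‖(z - w) - (c:ℂ) * (z / ((a ^ 2 + ε ^ 2 : ℝ) : ℂ) - w / ((b ^ 2 + ε ^ 2 : ℝ) : ℂ))‖ := by
        rw [hsplit]
    _ ≤ ‖z - w‖ + ‖(c:ℂ) * (z / ((a ^ 2 + ε ^ 2 : ℝ) : ℂ) - w / ((b ^ 2 + ε ^ 2 : ℝ) : ℂ))‖ :=
        norm_sub_le _ _
    _ ≤ ‖z - w‖ + c * (‖z - w‖ / ε ^ 2) := by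
        rw [norm_mul, Complex.norm_real, Real.norm_eq_abs, abs_of_nonneg hc]
        exact add_le_add_right (mul_le_mul_of_nonneg_left habs hc) _
    _ = (1 + c / ε ^ 2) * ‖z - w‖ := by ring

open Matrix in
/-- Theorem 2, MLP part: the complex-gradient map of the MLP
objective is Lipschitz with constant `1 + (maxᵢ Iᵢ)/ε²` in the Euclidean norm. -/
theorem mlpGrad_lipschitz {N : ℕ} (hN : 0 < N)
    (U : Matrix (Fin N) (Fin N) ℂ) (hU : star U * U = 1 ∧ U * star U = 1)
    (I : Fin N → ℝ) (hI : ∀ i, 0 ≤ I i) (ε : ℝ) (hε : 0 < ε) :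
    ∀ u w : EuclideanSpace ℂ (Fin N),
      ‖mlpGrad U I ε u - mlpGrad U I ε w‖ ≤
        (1 + (⨆ i : Fin N, I i) / ε ^ 2) * ‖u - w‖ := by
  intro u w
  haveI : Nonempty (Fin N) := ⟨⟨0, hN⟩⟩
  have hbdd : BddAbove (Set.range I) := (Set.finite_range I).bddAbove
  set S := ⨆ i : Fin N, I i with hS
  have hIS : ∀ i, I i ≤ S := fun i => le_ciSup hbdd i
  have hS0 : 0 ≤ S := le_trans (hI (Classical.arbitrary _)) (hIS _)
  set K := 1 + S / ε ^ 2 with hK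
  have hK0 : 0 ≤ K := by positivity
  set φ : (Fin N → ℂ) → (Fin N → ℂ) := fun v i =>
    v i * (((1 : ℝ) - I i / ((‖v i‖) ^ 2 + ε ^ 2) : ℝ) : ℂ) with hφ
  have hGdiff : (mlpGrad U I ε u - mlpGrad U I ε w : EuclideanSpace ℂ (Fin N))
      = (fun x : Fin N → ℂ => (WithLp.toLp 2 x : EuclideanSpace ℂ (Fin N)))
          ((star U) *ᵥ (φ (U *ᵥ u) - φ (U *ᵥ w))) := by
    simp only [mlpGrad, Matrix.mulVec_sub, ← WithLp.toLp_sub]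
    rfl
  have hstar : star (star U) * star U = 1 := by rw [star_star]; exact hU.2
  have hnormG : ∑ i, Complex.normSq (((star U) *ᵥ (φ (U *ᵥ u) - φ (U *ᵥ w))) i)
      = ∑ i, Complex.normSq ((φ (U *ᵥ u) - φ (U *ᵥ w)) i) :=
    sum_normSq_mulVec_aux (star U) hstar _
  have hpt : ∀ i, Complex.normSq ((φ (U *ᵥ u) - φ (U *ᵥ w)) i)
      ≤ K ^ 2 * Complex.normSq ((U *ᵥ u - U *ᵥ w) i) := by
    intro i
    have h1 := scalar_lip_aux ε hε (I i) (hI i) ((U *ᵥ u) i) ((U *ᵥ w) i)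
    have h2 : (1 + I i / ε ^ 2) ≤ K := by
      rw [hK]
      have := hIS i
      gcongr
    have h3 : ‖(φ (U *ᵥ u)) i - (φ (U *ᵥ w)) i‖
        ≤ K * ‖(U *ᵥ u) i - (U *ᵥ w) i‖ :=
      le_trans h1 (mul_le_mul_of_nonneg_right h2 (norm_nonneg _))
    have h4 : Complex.normSq ((φ (U *ᵥ u)) i - (φ (U *ᵥ w)) i)
        ≤ (K * ‖(U *ᵥ u) i - (U *ᵥ w) i‖) ^ 2 := by
      rw [← Complex.sq_norm]
      exact pow_le_pow_left₀ (norm_nonneg _) h3 2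
    simp only [Pi.sub_apply]
    calc Complex.normSq ((φ (U *ᵥ u)) i - (φ (U *ᵥ w)) i)
        ≤ (K * ‖(U *ᵥ u) i - (U *ᵥ w) i‖) ^ 2 := h4
      _ = K ^ 2 * Complex.normSq ((U *ᵥ u) i - (U *ᵥ w) i) := by
          rw [mul_pow, Complex.sq_norm]
  have hsum : ∑ i, Complex.normSq ((φ (U *ᵥ u) - φ (U *ᵥ w)) i)
      ≤ K ^ 2 * ∑ i, Complex.normSq ((U *ᵥ u - U *ᵥ w) i) := by
    rw [Finset.mul_sum]
    exact Finset.sum_le_sum fun i _ => hpt i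
  have hUpres : ∑ i, Complex.normSq ((U *ᵥ u - U *ᵥ w) i)
      = ∑ i, Complex.normSq ((u - w : EuclideanSpace ℂ (Fin N)) i) := by
    have : (U *ᵥ u - U *ᵥ w) = U *ᵥ (fun i => (u - w : EuclideanSpace ℂ (Fin N)) i) := by
      rw [show (fun i => (u - w : EuclideanSpace ℂ (Fin N)) i) = (fun i => u i - w i) from rfl,
        ← Matrix.mulVec_sub]
      rfl
    rw [this]
    exact sum_normSq_mulVec_aux U hU.1 _
  rw [hGdiff]
  rw [EuclideanSpace.norm_eq, EuclideanSpace.norm_eq]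
  have hfin : ∑ i, ‖((star U) *ᵥ (φ (U *ᵥ u) - φ (U *ᵥ w))) i‖ ^ 2
      ≤ K ^ 2 * ∑ i, ‖(u - w : EuclideanSpace ℂ (Fin N)) i‖ ^ 2 := by
    have e1 : ∀ z : ℂ, ‖z‖ ^ 2 = Complex.normSq z := fun z => by
      rw [Complex.sq_norm]
    simp only [e1]
    rw [hnormG]
    calc ∑ i, Complex.normSq ((φ (U *ᵥ u) - φ (U *ᵥ w)) i)
        ≤ K ^ 2 * ∑ i, Complex.normSq ((U *ᵥ u - U *ᵥ w) i) := hsum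
      _ = K ^ 2 * ∑ i, Complex.normSq ((u - w : EuclideanSpace ℂ (Fin N)) i) := by rw [hUpres]
  calc Real.sqrt (∑ i, ‖((star U) *ᵥ (φ (U *ᵥ u) - φ (U *ᵥ w))) i‖ ^ 2)
      ≤ Real.sqrt (K ^ 2 * ∑ i, ‖(u - w : EuclideanSpace ℂ (Fin N)) i‖ ^ 2) :=
        Real.sqrt_le_sqrt hfin
    _ = K * Real.sqrt (∑ i, ‖(u - w : EuclideanSpace ℂ (Fin N)) i‖ ^ 2) := by
        rw [Real.sqrt_mul (by positivity), Real.sqrt_sq hK0]
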